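/- If f and g are generalized palindromes in ℂ[z,z⁻¹] that are equicorrelational, then f and g are ℂ[z,z⁻¹]-associates. -/

import Mathlib

open LaurentPolynomial
open scoped Classical

/-- The length of a Laurent polynomial: 1 plus the difference between the maximal and
minimal exponents occurring with nonzero coefficient; the length of 0 is 0. -/
noncomputable def len {F : Type*} [Field F] (f : LaurentPolynomial F) : ℤ :=
  if h : f = 0 then 0
  else f.coeff.support.max' (Finsupp.support_nonempty_iff.mpr (fun h' => h (AddMonoidAlgebra.coeff_injective (h'.trans AddMonoidAlgebra.coeff_zero.symm))))
     - f.coeff.support.min' (Finsupp.support_nonempty_iff.mpr (fun h' => h (AddMonoidAlgebra.coeff_injective (h'.trans AddMonoidAlgebra.coeff_zero.symm)))) + 1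
/-- Substitution `f(z) ↦ f(z^m)`: the image of `f` under the ring homomorphism
sending `z` to `z^m`. -/
noncomputable def subst {F : Type*} [Field F] (m : ℤ) (f : LaurentPolynomial F) :
    LaurentPolynomial F :=
  AddMonoidAlgebra.mapDomainRingHom F (AddMonoidHom.mulLeft m) f

/-- The subring `F[z,z⁻¹]` of `E[z,z⁻¹]` consisting of Laurent polynomials all of whose
coefficients lie in the subfield `F` of `E`. -/
noncomputable def LRing {E : Type*} [Field E] (F : Subfield E) :
    Subring (LaurentPolynomial E) where
  carrier := {f : LaurentPolynomial E | ∀ n : ℤ, f.coeff n ∈ F}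
  zero_mem' := fun n => F.zero_mem
  one_mem' := by
    intro n
    rw [AddMonoidAlgebra.one_def, AddMonoidAlgebra.coeff_single, Finsupp.single_apply]
    split_ifs
    · exact F.one_mem
    · exact F.zero_mem
  add_mem' := by
    intro f g hf hg n
    rw [AddMonoidAlgebra.coeff_add, Finsupp.add_apply]
    exact add_mem (hf n) (hg n)
  neg_mem' := by
    intro f hf n
    rw [AddMonoidAlgebra.coeff_neg, Finsupp.neg_apply]
    exact neg_mem (hf n)
  mul_mem' := by
    intro f g hf hg n
    rw [AddMonoidAlgebra.coeff_mul]
    refine sum_mem fun a ha => sum_mem fun b hb => ?_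
    dsimp only
    split_ifs
    · exact mul_mem (hf a) (hg b)
    · exact zero_mem F

/-- The conjugate of `f(z) = Σ f_j z^j`, namely `f̄(z) = Σ conj(f_j) z^{-j}`. -/
noncomputable def lconj (f : LaurentPolynomial ℂ) : LaurentPolynomial ℂ :=
  AddMonoidAlgebra.ofCoeff
    (Finsupp.equivMapDomain (Equiv.neg ℤ) (Finsupp.mapRange (starRingEnd ℂ) (map_zero _) f.coeff))

/-- `f` and `g` are equicorrelational: `f·f̄ = c·g·ḡ` for some positive real `c`. -/
def Equicorrelational (f g : LaurentPolynomial ℂ) : Prop :=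
  ∃ c : ℝ, 0 < c ∧ f * lconj f = C (c : ℂ) * (g * lconj g)

/-- `f` and `g` are trivially equicorrelational: `g` is a `ℂ[z,z⁻¹]`-associate of `f`
or of `f̄`. -/
def TrivEquicorrelational (f g : LaurentPolynomial ℂ) : Prop :=
  Associated g f ∨ Associated g (lconj f)

/-- A generalized palindrome: `f̄` is a `ℂ[z,z⁻¹]`-associate of `f`. -/
def GenPalindrome (f : LaurentPolynomial ℂ) : Prop :=
  Associated (lconj f) f

/-- `g` is an `F[z,z⁻¹]`-associate of `f`: `g = u·f` for some unit `u` of the subring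
`F[z,z⁻¹]` of `ℂ[z,z⁻¹]`. -/
def FAssoc (F : Subfield ℂ) (g f : LaurentPolynomial ℂ) : Prop :=
  ∃ u : (LRing F)ˣ, g = ((u : LRing F) : LaurentPolynomial ℂ) * f

/-- The `F[z,z⁻¹]`-associate class of `f`. -/
def facl (F : Subfield ℂ) (f : LaurentPolynomial ℂ) : Set (LaurentPolynomial ℂ) :=
  {g | FAssoc F g f}

/-- The `F`-trivial equicorrelationality class of `f`: all elements of `F[z,z⁻¹]`
that are trivially equicorrelational to `f`. -/
def fte (F : Subfield ℂ) (f : LaurentPolynomial ℂ) : Set (LaurentPolynomial ℂ) :=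
  {g | g ∈ LRing F ∧ TrivEquicorrelational f g}

/-- A `k`-ary sequence: a Laurent polynomial whose support is a segment of consecutive
integers and whose nonzero coefficients are complex `k`-th roots of unity. -/
def IsKary (k : ℕ) (f : LaurentPolynomial ℂ) : Prop :=
  (∀ i j l : ℤ, i ≤ j → j ≤ l → f.coeff i ≠ 0 → f.coeff l ≠ 0 → f.coeff j ≠ 0) ∧
  ∀ n : ℤ, f.coeff n ≠ 0 → (f.coeff n) ^ k = 1

/-- A binary sequence: a Laurent polynomial whose support is a segment of consecutive
integers and whose nonzero coefficients all lie in `{1, -1}`. -/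
def IsBinary (f : LaurentPolynomial ℂ) : Prop :=
  (∀ i j l : ℤ, i ≤ j → j ≤ l → f.coeff i ≠ 0 → f.coeff l ≠ 0 → f.coeff j ≠ 0) ∧
  ∀ n : ℤ, f.coeff n ≠ 0 → f.coeff n = 1 ∨ f.coeff n = -1

/-!
`ℂ[z,z⁻¹]` is the localization of `ℂ[z]` at the powers of `z`, hence a unique factorization
domain. A generalized palindrome `f` has `f·f̄` associated to `f²`, so equicorrelationality of
two generalized palindromes makes `f²` and `g²` associates, and comparing multiplicities of
prime factors shows that `f` and `g` are associates.
-/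

instance LaurentPolynomial.instUniqueFactorizationMonoid {R : Type*} [CommRing R]
    [UniqueFactorizationMonoid R] : UniqueFactorizationMonoid R[T;T⁻¹] :=
  UniqueFactorizationMonoid.of_isLocalization (Submonoid.powers (Polynomial.X : Polynomial R)) _

theorem Associated.of_pow {R : Type*} [CommMonoidWithZero R] [UniqueFactorizationMonoid R]
    {a b : R} {n : ℕ} (hn : n ≠ 0) (h : Associated (a ^ n) (b ^ n)) : Associated a b :=
  dvd_dvd_iff_associated.mp ⟨(UniqueFactorizationMonoid.pow_dvd_pow_iff_dvd hn).mp h.dvd,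
    (UniqueFactorizationMonoid.pow_dvd_pow_iff_dvd hn).mp h.symm.dvd⟩

theorem GenPalindrome.mul_lconj_associated_sq {f : LaurentPolynomial ℂ} (hf : GenPalindrome f) :
    Associated (f * lconj f) (f ^ 2) := by
  rw [sq]
  exact hf.mul_left f

theorem Equicorrelational.mul_lconj_associated {f g : LaurentPolynomial ℂ}
    (h : Equicorrelational f g) : Associated (f * lconj f) (g * lconj g) := by
  obtain ⟨c, hc, hfg⟩ := h
  have hC : IsUnit (C (c : ℂ) : LaurentPolynomial ℂ) :=
    (Ne.isUnit (by exact_mod_cast hc.ne')).map C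
  rw [hfg]
  exact associated_unit_mul_left _ _ hC

theorem stmt13 (f g : LaurentPolynomial ℂ) (hf : GenPalindrome f)
    (hg : GenPalindrome g) (h : Equicorrelational f g) :
    Associated f g :=
  Associated.of_pow two_ne_zero <|
    hf.mul_lconj_associated_sq.symm.trans (h.mul_lconj_associated.trans hg.mul_lconj_associated_sq)
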